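/- arXiv:2406.01504 — 5 statements merged into one kernel-verified Lean document; each statement's English description precedes it below -/
import Mathlib

section
/- For every connected hypergraph H on n vertices (n ≥ 1), the Wiener index satisfies C(n,2) ≤ W(H) ≤ C(n+1,3), where C(a,b) denotes the binomial coefficient. -/
variable {α : Type*} {β : Type*}

/-- A hypergraph: a finite vertex set together with a set of edges,
each an at-least-2-element subset of the vertex set. -/
structure FinsetHypergraph (α : Type*) where
  verts : Finset α
  edges : Finset (Finset α)
  edge_sub : ∀ e ∈ edges, e ⊆ verts
  edge_card : ∀ e ∈ edges, 2 ≤ e.card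

namespace FinsetHypergraph

/-- The 2-section graph of a hypergraph: two distinct vertices are adjacent
iff some edge contains both. -/
def twoSection (H : FinsetHypergraph α) : SimpleGraph α where
  Adj u v := u ≠ v ∧ ∃ e ∈ H.edges, u ∈ e ∧ v ∈ e
  symm := by
    constructor
    rintro u v ⟨huv, e, he, hu, hv⟩
    exact ⟨huv.symm, e, he, hv, hu⟩
  loopless := by
    constructor
    rintro u ⟨h, -⟩
    exact h rfl

/-- Distance between two vertices: graph distance in the 2-section. -/
noncomputable def dist (H : FinsetHypergraph α) (u v : α) : ℕ :=
  H.twoSection.dist u v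

/-- A hypergraph is connected if every two of its vertices are joined by a path. -/
def Connected (H : FinsetHypergraph α) : Prop :=
  ∀ u ∈ H.verts, ∀ v ∈ H.verts, H.twoSection.Reachable u v

/-- The Wiener index (total distance): the sum of distances over all
unordered pairs of distinct vertices. -/
noncomputable def wiener [DecidableEq α] (H : FinsetHypergraph α) : ℕ :=
  ∑ p ∈ H.verts.sym2.filter (fun p => ¬ p.IsDiag),
    Sym2.lift ⟨fun u v => H.dist u v, fun _ _ => SimpleGraph.dist_comm⟩ p

/-- Vertex deletion: remove the vertex and all edges containing it. -/
def delete [DecidableEq α] (H : FinsetHypergraph α) (v : α) : FinsetHypergraph α where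
  verts := H.verts.erase v
  edges := H.edges.filter fun e => v ∉ e
  edge_sub := by
    intro e he x hx
    rw [Finset.mem_filter] at he
    exact Finset.mem_erase.mpr ⟨fun h => he.2 (h ▸ hx), H.edge_sub e he.1 hx⟩
  edge_card := fun e he => H.edge_card e (Finset.mem_filter.mp he).1

/-- A Šoltés hypergraph: a connected hypergraph on at least 2 vertices such that
deleting any vertex leaves a connected hypergraph with the same Wiener index. -/
def IsSoltes [DecidableEq α] (H : FinsetHypergraph α) : Prop :=
  2 ≤ H.verts.card ∧ H.Connected ∧
    ∀ v ∈ H.verts, (H.delete v).Connected ∧ (H.delete v).wiener = H.wiener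

/-- The diameter: the maximum distance over unordered pairs of distinct vertices. -/
noncomputable def diam [DecidableEq α] (H : FinsetHypergraph α) : ℕ :=
  H.verts.offDiag.sup fun p => H.dist p.1 p.2

/-- The degree of a vertex: the number of edges containing it. -/
def degree [DecidableEq α] (H : FinsetHypergraph α) (v : α) : ℕ :=
  (H.edges.filter fun e => v ∈ e).card

/-- FinsetHypergraph isomorphism: a bijection between the vertex sets mapping
edges onto edges. -/
def IsIsoTo [DecidableEq β] (H : FinsetHypergraph α) (H' : FinsetHypergraph β) : Prop :=
  ∃ f : α → β, Set.InjOn f ↑H.verts ∧ H'.verts = H.verts.image f ∧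
    H'.edges = H.edges.image fun e => e.image f

end FinsetHypergraph


open Finset

namespace Finset

theorem sum_le_choose_of_Icc_subset_image {ι : Type*} [DecidableEq ι] (s : Finset ι)
    (f : ι → ℕ) (h : ∀ i ∈ s, Icc 1 (f i) ⊆ s.image f) :
    ∑ i ∈ s, f i ≤ (#s + 1).choose 2 := by
  induction s using Finset.induction_on_max_value f with
  | empty => simp
  | insert a s ha hmax ih =>
    have hfa : f a ≤ #s + 1 := calc
      f a = #(Icc 1 (f a)) := by simp
      _ ≤ #((insert a s).image f) := card_le_card (h a (mem_insert_self a s))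
      _ ≤ #(insert a s) := card_image_le
      _ = #s + 1 := card_insert_of_notMem ha
    have hs : ∑ i ∈ s, f i ≤ (#s + 1).choose 2 := by
      refine ih fun i hi k hk => ?_
      obtain ⟨j, hj, rfl⟩ := mem_image.mp (h i (mem_insert_of_mem hi) hk)
      rcases mem_insert.mp hj with rfl | hj
      · have : f j = f i := le_antisymm ((mem_Icc.mp hk).2) (hmax i hi)
        exact this ▸ mem_image_of_mem f hi
      · exact mem_image_of_mem f hj
    have hc : (#s + 1 + 1).choose 2 = #s + 1 + (#s + 1).choose 2 := by
      rw [Nat.choose_succ_succ', Nat.choose_one_right]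
    rw [sum_insert ha, card_insert_of_notMem ha, hc]
    omega

theorem sum_sym2_filter_not_isDiag_insert {ι M : Type*} [DecidableEq ι] [AddCommMonoid M]
    {v : ι} {s : Finset ι} (hv : v ∉ s) (f : Sym2 ι → M) :
    ∑ p ∈ (insert v s).sym2 with ¬p.IsDiag, f p =
      ∑ u ∈ s, f s(v, u) + ∑ p ∈ s.sym2 with ¬p.IsDiag, f p := by
  rw [← cons_eq_insert v s hv, sym2_cons, filter_disjUnion, sum_disjUnion, filter_map, sum_map,
    filter_cons]
  simp [filter_true_of_mem fun u hu => (ne_of_mem_of_not_mem hu hv).symm]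

theorem card_sym2_filter_not_isDiag {ι : Type*} [DecidableEq ι] (s : Finset ι) :
    #{p ∈ s.sym2 | ¬p.IsDiag} = (#s).choose 2 := by
  induction s using Finset.induction_on with
  | empty => simp
  | insert v s hv ih =>
    rw [card_eq_sum_ones, sum_sym2_filter_not_isDiag_insert hv, ← card_eq_sum_ones,
      ← card_eq_sum_ones, ih, card_insert_of_notMem hv, Nat.choose_succ_succ',
      Nat.choose_one_right]

end Finset

namespace SimpleGraph

variable {G : SimpleGraph α}

def restrict (G : SimpleGraph α) (S : Set α) : SimpleGraph α where
  Adj u v := G.Adj u v ∧ u ∈ S ∧ v ∈ S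
  symm := ⟨fun _ _ h => ⟨h.1.symm, h.2.2, h.2.1⟩⟩
  loopless := ⟨fun u h => G.loopless.irrefl u h.1⟩

@[simp]
theorem restrict_adj {S : Set α} {u v : α} :
    (G.restrict S).Adj u v ↔ G.Adj u v ∧ u ∈ S ∧ v ∈ S := Iff.rfl

theorem restrict_le (S : Set α) : G.restrict S ≤ G := fun _ _ h => h.1

theorem support_restrict_subset (S : Set α) : (G.restrict S).support ⊆ S :=
  fun _ ⟨_, h⟩ => (restrict_adj.mp h).2.1

theorem Walk.reachable_restrict {u v : α} (p : G.Walk u v) {S : Set α}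
    (hp : ∀ x ∈ p.support, x ∈ S) : (G.restrict S).Reachable u v := by
  refine ⟨p.transfer _ fun e he => ?_⟩
  induction e with
  | _ x y =>
    exact restrict_adj.mpr ⟨p.adj_of_mem_edges he, hp x (p.fst_mem_support_of_mem_edges he),
      hp y (p.snd_mem_support_of_mem_edges he)⟩

theorem Reachable.mem_support_of_ne {u v : α} (h : G.Reachable u v) (huv : u ≠ v) :
    v ∈ G.support := by
  obtain ⟨p⟩ := h.symm
  cases p with
  | nil => exact absurd rfl huv
  | cons hadj _ => exact ⟨_, hadj⟩

theorem Reachable.exists_dist_eq_of_le {u v : α} (h : G.Reachable u v) {k : ℕ}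
    (hk : k ≤ G.dist u v) : ∃ w, G.Reachable u w ∧ G.dist u w = k := by
  obtain ⟨p, hp⟩ := h.exists_walk_length_eq_dist
  have htake : (p.take k).length = k := by simp; omega
  refine ⟨p.getVert k, ⟨p.take k⟩, le_antisymm ((dist_le _).trans htake.le) ?_⟩
  have hdrop : G.dist (p.getVert k) v ≤ p.length - k := (p.drop_length k) ▸ dist_le _
  have htri := Reachable.dist_triangle_left (G := G) ⟨p.take k⟩ v
  omega

theorem Walk.notMem_support_of_dist_le [DecidableEq α] {u₀ u v : α} (p : G.Walk u₀ u)
    (hp : p.length = G.dist u₀ u) (huv : u ≠ v) (hfar : G.dist u₀ u ≤ G.dist u₀ v) :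
    v ∉ p.support := fun hv => by
  have hlt := p.length_takeUntil_lt_length hv huv.symm
  have hle := dist_le (p.takeUntil v hv)
  omega

theorem sum_dist_le_choose_two [DecidableEq α] {S : Finset α} (hG : G.support ⊆ S) {v : α}
    (hv : v ∈ S) (hconn : ∀ u ∈ S, G.Reachable v u) :
    ∑ u ∈ S.erase v, G.dist v u ≤ (#S).choose 2 := by
  have hS : #(S.erase v) + 1 = #S := card_erase_add_one hv
  refine hS ▸ Finset.sum_le_choose_of_Icc_subset_image _ _ fun u hu k hk => ?_
  obtain ⟨huv, huS⟩ := mem_erase.mp hu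
  obtain ⟨hk1, hku⟩ := mem_Icc.mp hk
  obtain ⟨w, hw, rfl⟩ := (hconn u huS).exists_dist_eq_of_le hku
  have hwv : w ≠ v := by rintro rfl; simp at hk1
  exact mem_image_of_mem _ (mem_erase.mpr ⟨hwv, hG (hw.mem_support_of_ne hwv.symm)⟩)

theorem reachable_restrict_erase_of_dist_le [DecidableEq α] {S : Finset α}
    (hG : G.support ⊆ S) {u₀ u v : α} (hu₀ : u₀ ∈ S) (hu : G.Reachable u₀ u) (huv : u ≠ v)
    (hfar : G.dist u₀ u ≤ G.dist u₀ v) : (G.restrict (S.erase v)).Reachable u₀ u := by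
  obtain ⟨p, hp⟩ := hu.exists_walk_length_eq_dist
  refine p.reachable_restrict fun x hx => mem_erase.mpr ⟨?_, ?_⟩
  · rintro rfl
    exact p.notMem_support_of_dist_le hp huv hfar hx
  · obtain rfl | hne := eq_or_ne u₀ x
    · exact hu₀
    · exact hG (Reachable.mem_support_of_ne ⟨p.takeUntil x hx⟩ hne)

section wienerOn

variable [DecidableEq α]

noncomputable def wienerOn (G : SimpleGraph α) (S : Finset α) : ℕ :=
  ∑ p ∈ S.sym2 with ¬p.IsDiag, Sym2.lift ⟨fun u v => G.dist u v, fun _ _ => dist_comm⟩ p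

theorem wienerOn_insert {v : α} {S : Finset α} (hv : v ∉ S) :
    G.wienerOn (insert v S) = ∑ u ∈ S, G.dist v u + G.wienerOn S :=
  sum_sym2_filter_not_isDiag_insert hv _

theorem wienerOn_le_of_le {G' : SimpleGraph α} (hle : G ≤ G') {S : Finset α}
    (hconn : ∀ u ∈ S, ∀ w ∈ S, G.Reachable u w) : G'.wienerOn S ≤ G.wienerOn S := by
  refine sum_le_sum fun p hp => ?_
  induction p with
  | _ u w =>
    have huw := mk_mem_sym2_iff.mp (mem_filter.mp hp).1
    exact (hconn u huw.1 w huw.2).dist_anti hle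

theorem choose_two_le_wienerOn {S : Finset α} (hconn : ∀ u ∈ S, ∀ w ∈ S, G.Reachable u w) :
    (#S).choose 2 ≤ G.wienerOn S := by
  calc (#S).choose 2 = #{p ∈ S.sym2 | ¬p.IsDiag} • 1 := by
        rw [card_sym2_filter_not_isDiag, smul_eq_mul, mul_one]
    _ ≤ G.wienerOn S := card_nsmul_le_sum _ _ 1 fun p hp => ?_
  induction p with
  | _ u w =>
    obtain ⟨huw, hne⟩ := mem_filter.mp hp
    obtain ⟨hu, hw⟩ := mk_mem_sym2_iff.mp huw
    exact (hconn u hu w hw).pos_dist_of_ne (Sym2.mk_isDiag_iff.not.mp hne)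

theorem wienerOn_le_choose_three (S : Finset α) (hG : G.support ⊆ S)
    (hconn : ∀ u ∈ S, ∀ w ∈ S, G.Reachable u w) : G.wienerOn S ≤ (#S + 1).choose 3 := by
  induction S using Finset.strongInduction generalizing G with
  | H S ih =>
    obtain rfl | ⟨u₀, hu₀⟩ := S.eq_empty_or_nonempty
    · simp [wienerOn]
    obtain ⟨v, hv, hfar⟩ := exists_max_image S (G.dist u₀) ⟨u₀, hu₀⟩
    set S' := S.erase v
    have hconn' : ∀ u ∈ S', ∀ w ∈ S', (G.restrict S').Reachable u w := by
      have h u (hu : u ∈ S') : (G.restrict S').Reachable u₀ u :=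
        reachable_restrict_erase_of_dist_le hG hu₀ (hconn u₀ hu₀ u (mem_of_mem_erase hu))
          (ne_of_mem_erase hu) (hfar u (mem_of_mem_erase hu))
      exact fun u hu w hw => (h u hu).symm.trans (h w hw)
    calc G.wienerOn S = ∑ u ∈ S', G.dist v u + G.wienerOn S' := by
          rw [← wienerOn_insert (notMem_erase v S), insert_erase hv]
      _ ≤ (#S).choose 2 + (#S' + 1).choose 3 :=
          add_le_add (sum_dist_le_choose_two hG hv (hconn v hv))
            ((wienerOn_le_of_le (restrict_le S') hconn').trans
              (ih S' (erase_ssubset hv) (support_restrict_subset _) hconn'))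
      _ = (#S + 1).choose 3 := by
          rw [← card_erase_add_one hv]
          exact (Nat.choose_succ_succ' (#S' + 1) 2).symm

end wienerOn

end SimpleGraph

namespace FinsetHypergraph

theorem twoSection_support_subset (H : FinsetHypergraph α) :
    H.twoSection.support ⊆ H.verts := fun _ ⟨_, _, e, he, hu, _⟩ => H.edge_sub e he hu

theorem wiener_eq_wienerOn [DecidableEq α] (H : FinsetHypergraph α) :
    H.wiener = H.twoSection.wienerOn H.verts := rfl

end FinsetHypergraph

theorem stmt0_general {α : Type*} [DecidableEq α] (H : FinsetHypergraph α)
    (hconn : H.Connected) :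
    (H.verts.card).choose 2 ≤ H.wiener ∧ H.wiener ≤ (H.verts.card + 1).choose 3 := by
  rw [H.wiener_eq_wienerOn]
  exact ⟨H.twoSection.choose_two_le_wienerOn hconn,
    H.twoSection.wienerOn_le_choose_three H.verts H.twoSection_support_subset hconn⟩

theorem stmt0 {α : Type*} [DecidableEq α] (H : FinsetHypergraph α)
    (hconn : H.Connected) (hn : 1 ≤ H.verts.card) :
    (H.verts.card).choose 2 ≤ H.wiener ∧ H.wiener ≤ (H.verts.card + 1).choose 3 :=
  stmt0_general H hconn
end

section
/- The hypergraph H on vertex set {0,1,2,3,4} whose edges are the five pairs {i, i+1 mod 5} for i = 0,...,4 together with the full set {0,1,2,3,4} (a 5-cycle with one hyperedge containing all 5 vertices) is a Šoltés hypergraph, with W(H) = W(H \ v) = 10 for every vertex v. -/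
variable {α : Type*} {β : Type*}

/-- A hypergraph: a finite vertex set together with a set of edges,
each an at-least-2-element subset of the vertex set. -/
structure FinHypergraph (α : Type*) where
  verts : Finset α
  edges : Finset (Finset α)
  edge_sub : ∀ e ∈ edges, e ⊆ verts
  edge_card : ∀ e ∈ edges, 2 ≤ e.card

namespace FinHypergraph

/-- The 2-section graph of a hypergraph: two distinct vertices are adjacent
iff some edge contains both. -/
def twoSection (H : FinHypergraph α) : SimpleGraph α where
  Adj u v := u ≠ v ∧ ∃ e ∈ H.edges, u ∈ e ∧ v ∈ e
  symm := ⟨by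
    rintro u v ⟨huv, e, he, hu, hv⟩
    exact ⟨huv.symm, e, he, hv, hu⟩⟩
  loopless := ⟨by
    rintro u ⟨h, -⟩
    exact h rfl⟩

/-- Distance between two vertices: graph distance in the 2-section. -/
noncomputable def dist (H : FinHypergraph α) (u v : α) : ℕ :=
  H.twoSection.dist u v

/-- A hypergraph is connected if every two of its vertices are joined by a path. -/
def Connected (H : FinHypergraph α) : Prop :=
  ∀ u ∈ H.verts, ∀ v ∈ H.verts, H.twoSection.Reachable u v

/-- The Wiener index (total distance): the sum of distances over all
unordered pairs of distinct vertices. -/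
noncomputable def wiener [DecidableEq α] (H : FinHypergraph α) : ℕ :=
  ∑ p ∈ H.verts.sym2.filter (fun p => ¬ p.IsDiag),
    Sym2.lift ⟨fun u v => H.dist u v, fun _ _ => SimpleGraph.dist_comm⟩ p

/-- Vertex deletion: remove the vertex and all edges containing it. -/
def delete [DecidableEq α] (H : FinHypergraph α) (v : α) : FinHypergraph α where
  verts := H.verts.erase v
  edges := H.edges.filter fun e => v ∉ e
  edge_sub := by
    intro e he x hx
    rw [Finset.mem_filter] at he
    exact Finset.mem_erase.mpr ⟨fun h => he.2 (h ▸ hx), H.edge_sub e he.1 hx⟩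
  edge_card := fun e he => H.edge_card e (Finset.mem_filter.mp he).1

/-- A Šoltés hypergraph: a connected hypergraph on at least 2 vertices such that
deleting any vertex leaves a connected hypergraph with the same Wiener index. -/
def IsSoltes [DecidableEq α] (H : FinHypergraph α) : Prop :=
  2 ≤ H.verts.card ∧ H.Connected ∧
    ∀ v ∈ H.verts, (H.delete v).Connected ∧ (H.delete v).wiener = H.wiener

/-- The diameter: the maximum distance over unordered pairs of distinct vertices. -/
noncomputable def diam [DecidableEq α] (H : FinHypergraph α) : ℕ :=
  H.verts.offDiag.sup fun p => H.dist p.1 p.2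

/-- The degree of a vertex: the number of edges containing it. -/
def degree [DecidableEq α] (H : FinHypergraph α) (v : α) : ℕ :=
  (H.edges.filter fun e => v ∈ e).card

/-- FinHypergraph isomorphism: a bijection between the vertex sets mapping
edges onto edges. -/
def IsIsoTo [DecidableEq β] (H : FinHypergraph α) (H' : FinHypergraph β) : Prop :=
  ∃ f : α → β, Set.InjOn f ↑H.verts ∧ H'.verts = H.verts.image f ∧
    H'.edges = H.edges.image fun e => e.image f

end FinHypergraph

/-- The 5-cycle together with one hyperedge containing all 5 vertices. -/
def cycleFivePlus : FinHypergraph (Fin 5) where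
  verts := Finset.univ
  edges := (Finset.univ.image fun i : Fin 5 => ({i, i + 1} : Finset (Fin 5))) ∪ {Finset.univ}
  edge_sub := by decide
  edge_card := by decide

/-! The edge containing all five vertices makes the 2-section of `cycleFivePlus` complete, so its
Wiener index is `C(5,2) = 10`. Deleting `v` destroys that edge and the two cycle edges at `v`,
leaving the path `v + 1, v + 2, v + 3, v + 4`, whose Wiener index is `3·1 + 2·2 + 1·3 = 10`.
Distances are certified by a potential that changes by at most one along every edge and, away
from the target, drops by exactly one along some edge. -/

namespace SimpleGraph

variable {V : Type*} {G : SimpleGraph V} {d : V → V → ℕ} {v : V}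

theorem Walk.le_length_of_adj_le_succ (hadj : ∀ u w, G.Adj u w → d u v ≤ d w v + 1)
    (hv : d v v = 0) {u : V} (p : G.Walk u v) : d u v ≤ p.length := by
  induction p with
  | nil => simp [hv]
  | cons h _ ih => simpa using (hadj _ _ h).trans (Nat.succ_le_succ (ih hadj hv))

theorem exists_walk_length_eq_of_descent {S : Set V}
    (hdesc : ∀ u ∈ S, u ≠ v → ∃ w ∈ S, G.Adj u w ∧ d w v + 1 = d u v) (hv : d v v = 0)
    {u : V} (hu : u ∈ S) : ∃ p : G.Walk u v, p.length = d u v := by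
  induction hn : d u v using Nat.strong_induction_on generalizing u with
  | _ n ih =>
    by_cases huv : u = v
    · subst huv
      exact ⟨Walk.nil, by simp [← hn, hv]⟩
    · obtain ⟨w, hw, hadj, hwd⟩ := hdesc u hu huv
      obtain ⟨p, hp⟩ := ih (d w v) (by omega) hw rfl
      exact ⟨Walk.cons hadj p, by simp [hp]; omega⟩

theorem reachable_and_dist_eq_of_descent {S : Set V}
    (hadj : ∀ u w, G.Adj u w → d u v ≤ d w v + 1)
    (hdesc : ∀ u ∈ S, u ≠ v → ∃ w ∈ S, G.Adj u w ∧ d w v + 1 = d u v) (hv : d v v = 0)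
    {u : V} (hu : u ∈ S) : G.Reachable u v ∧ G.dist u v = d u v := by
  obtain ⟨p, hp⟩ := exists_walk_length_eq_of_descent hdesc hv hu
  refine ⟨p.reachable, le_antisymm (hp ▸ dist_le p) ?_⟩
  obtain ⟨q, hq⟩ := p.reachable.exists_walk_length_eq_dist
  exact hq ▸ q.le_length_of_adj_le_succ hadj hv

end SimpleGraph

namespace FinHypergraph

variable {H : FinHypergraph α}

theorem wiener_eq_sum_of_dist_eq [DecidableEq α] (d : α → α → ℕ) (hd : ∀ a b, d a b = d b a)
    (h : ∀ a ∈ H.verts, ∀ b ∈ H.verts, a ≠ b → H.dist a b = d a b) :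
    H.wiener = ∑ p ∈ H.verts.sym2.filter (fun p => ¬ p.IsDiag), Sym2.lift ⟨d, hd⟩ p := by
  refine Finset.sum_congr rfl fun p hp => ?_
  induction p using Sym2.ind with
  | _ a b =>
    simp only [Finset.mem_filter, Finset.mk_mem_sym2_iff, Sym2.mk_isDiag_iff] at hp
    exact h a hp.1.1 b hp.1.2 hp.2

theorem twoSection_adj_of_verts_mem_edges (hH : H.verts ∈ H.edges) {a b : α} (ha : a ∈ H.verts)
    (hb : b ∈ H.verts) (hab : a ≠ b) : H.twoSection.Adj a b :=
  ⟨hab, H.verts, hH, ha, hb⟩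

theorem connected_of_verts_mem_edges (hH : H.verts ∈ H.edges) : H.Connected := by
  intro a ha b hb
  rcases eq_or_ne a b with rfl | hab
  · rfl
  · exact (twoSection_adj_of_verts_mem_edges hH ha hb hab).reachable

theorem wiener_of_verts_mem_edges [DecidableEq α] (hH : H.verts ∈ H.edges) :
    H.wiener = (H.verts.sym2.filter fun p => ¬ p.IsDiag).card := by
  rw [wiener_eq_sum_of_dist_eq (fun _ _ => 1) (fun _ _ => rfl), Finset.card_eq_sum_ones]
  · exact Finset.sum_congr rfl fun p _ => Sym2.ind (fun _ _ => rfl) p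
  · exact fun a ha b hb hab =>
      SimpleGraph.dist_eq_one_iff_adj.mpr (twoSection_adj_of_verts_mem_edges hH ha hb hab)

end FinHypergraph

namespace cycleFivePlus

theorem verts_mem_edges : cycleFivePlus.verts ∈ cycleFivePlus.edges := by decide

theorem wiener_eq : cycleFivePlus.wiener = 10 := by
  rw [FinHypergraph.wiener_of_verts_mem_edges verts_mem_edges]
  decide

/-- Deleting `v` leaves the path `v + 1, v + 2, v + 3, v + 4`; `a` sits at position `a - v`. -/
def pathPos (v a : Fin 5) : ℕ := (a - v : Fin 5)

theorem delete_twoSection_adj_iff (v a b : Fin 5) :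
    (cycleFivePlus.delete v).twoSection.Adj a b ↔
      a ≠ v ∧ b ≠ v ∧ Nat.dist (pathPos v a) (pathPos v b) = 1 := by
  show (a ≠ b ∧ ∃ e ∈ cycleFivePlus.edges.filter (v ∉ ·), a ∈ e ∧ b ∈ e) ↔ _
  revert v a b
  decide

theorem delete_reachable_and_dist {v a b : Fin 5} (ha : a ≠ v) (hb : b ≠ v) :
    (cycleFivePlus.delete v).twoSection.Reachable a b ∧
      (cycleFivePlus.delete v).dist a b = Nat.dist (pathPos v a) (pathPos v b) := by
  refine SimpleGraph.reachable_and_dist_eq_of_descent (S := {x | x ≠ v})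
    (d := fun x y => Nat.dist (pathPos v x) (pathPos v y)) ?_ ?_ (Nat.dist_self _) ha
  · intro x y hxy
    have := ((delete_twoSection_adj_iff v x y).mp hxy).2.2
    have := Nat.dist.triangle_inequality (pathPos v x) (pathPos v y) (pathPos v b)
    omega
  · simp only [Set.mem_ofPred_eq, delete_twoSection_adj_iff]
    revert v a b
    decide

theorem delete_connected (v : Fin 5) : (cycleFivePlus.delete v).Connected := fun _ ha _ hb =>
  (delete_reachable_and_dist (Finset.ne_of_mem_erase ha) (Finset.ne_of_mem_erase hb)).1

theorem delete_wiener_eq (v : Fin 5) : (cycleFivePlus.delete v).wiener = 10 := by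
  rw [FinHypergraph.wiener_eq_sum_of_dist_eq _ (fun _ _ => Nat.dist_comm _ _)
    fun a ha b hb _ => (delete_reachable_and_dist (Finset.ne_of_mem_erase ha)
      (Finset.ne_of_mem_erase hb)).2]
  revert v
  decide

end cycleFivePlus

theorem stmt3 : cycleFivePlus.IsSoltes ∧ cycleFivePlus.wiener = 10 ∧
    ∀ v ∈ cycleFivePlus.verts, (cycleFivePlus.delete v).wiener = 10 :=
  ⟨⟨by decide, FinHypergraph.connected_of_verts_mem_edges cycleFivePlus.verts_mem_edges,
      fun v _ => ⟨cycleFivePlus.delete_connected v,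
        (cycleFivePlus.delete_wiener_eq v).trans cycleFivePlus.wiener_eq.symm⟩⟩,
    cycleFivePlus.wiener_eq, fun v _ => cycleFivePlus.delete_wiener_eq v⟩
end

section
/- Let m ≥ 4, let k = C(m,2) and n = C(m+1,2) + 1, and let H be the hypergraph on vertex set Z/nZ whose edges are the n sets {i, i+1, ..., i+k-1} (taken modulo n) for i ∈ Z/nZ. Then H is a k-uniform Šoltés hypergraph; moreover H has diameter 1, W(H) = C(n,2), and W(H \ v) = C(n-1,2) + C(m+1,2) = C(n,2) for every vertex v. -/
variable {α : Type*} {β : Type*}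

/-- A hypergraph: a finite vertex set together with a set of edges,
each an at-least-2-element subset of the vertex set. -/
structure Hypergraph' (α : Type*) where
  verts : Finset α
  edges : Finset (Finset α)
  edge_sub : ∀ e ∈ edges, e ⊆ verts
  edge_card : ∀ e ∈ edges, 2 ≤ e.card

namespace Hypergraph'

/-- The 2-section graph of a hypergraph: two distinct vertices are adjacent
iff some edge contains both. -/
def twoSection (H : Hypergraph' α) : SimpleGraph α where
  Adj u v := u ≠ v ∧ ∃ e ∈ H.edges, u ∈ e ∧ v ∈ e
  symm := by
    constructor
    rintro u v ⟨huv, e, he, hu, hv⟩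
    exact ⟨huv.symm, e, he, hv, hu⟩
  loopless := by
    constructor
    rintro u ⟨h, -⟩
    exact h rfl

/-- Distance between two vertices: graph distance in the 2-section. -/
noncomputable def dist (H : Hypergraph' α) (u v : α) : ℕ :=
  H.twoSection.dist u v

/-- A hypergraph is connected if every two of its vertices are joined by a path. -/
def Connected (H : Hypergraph' α) : Prop :=
  ∀ u ∈ H.verts, ∀ v ∈ H.verts, H.twoSection.Reachable u v

/-- The Wiener index (total distance): the sum of distances over all
unordered pairs of distinct vertices. -/
noncomputable def wiener [DecidableEq α] (H : Hypergraph' α) : ℕ :=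
  ∑ p ∈ H.verts.sym2.filter (fun p => ¬ p.IsDiag),
    Sym2.lift ⟨fun u v => H.dist u v, fun _ _ => SimpleGraph.dist_comm⟩ p

/-- Vertex deletion: remove the vertex and all edges containing it. -/
def delete [DecidableEq α] (H : Hypergraph' α) (v : α) : Hypergraph' α where
  verts := H.verts.erase v
  edges := H.edges.filter fun e => v ∉ e
  edge_sub := by
    intro e he x hx
    rw [Finset.mem_filter] at he
    exact Finset.mem_erase.mpr ⟨fun h => he.2 (h ▸ hx), H.edge_sub e he.1 hx⟩
  edge_card := fun e he => H.edge_card e (Finset.mem_filter.mp he).1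

/-- A Šoltés hypergraph: a connected hypergraph on at least 2 vertices such that
deleting any vertex leaves a connected hypergraph with the same Wiener index. -/
def IsSoltes [DecidableEq α] (H : Hypergraph' α) : Prop :=
  2 ≤ H.verts.card ∧ H.Connected ∧
    ∀ v ∈ H.verts, (H.delete v).Connected ∧ (H.delete v).wiener = H.wiener

/-- The diameter: the maximum distance over unordered pairs of distinct vertices. -/
noncomputable def diam [DecidableEq α] (H : Hypergraph' α) : ℕ :=
  H.verts.offDiag.sup fun p => H.dist p.1 p.2

/-- The degree of a vertex: the number of edges containing it. -/
def degree [DecidableEq α] (H : Hypergraph' α) (v : α) : ℕ :=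
  (H.edges.filter fun e => v ∈ e).card

/-- Hypergraph isomorphism: a bijection between the vertex sets mapping
edges onto edges. -/
def IsIsoTo [DecidableEq β] (H : Hypergraph' α) (H' : Hypergraph' β) : Prop :=
  ∃ f : α → β, Set.InjOn f ↑H.verts ∧ H'.verts = H.verts.image f ∧
    H'.edges = H.edges.image fun e => e.image f

end Hypergraph'

/-!
Since the window length `k = C(m,2)` exceeds half of `n = C(m+1,2) + 1`, any two vertices lie
in a common window, so `H` is complete: diameter 1 and `W(H) = C(n,2)`. Deleting `v` keeps
exactly the windows that start at offset `s ∈ [1, n - k]` from `v`, hence two remaining vertices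
are adjacent iff their offsets from `v` differ by less than `k`; otherwise they have a common
neighbour. So `W(H \ v) = C(n-1,2) + N`, where `N` counts the offset pairs `1 ≤ a`, `a + k ≤ b < n`,
which is `C(n-k,2) = C(m+1,2) = n - 1`, and `C(n-1,2) + (n-1) = C(n,2)`.
-/

open Finset

lemma Nat.choose_two_succ (n : ℕ) : (n + 1).choose 2 = n.choose 2 + n := by
  rw [Nat.choose_succ_succ', Nat.choose_one_right, add_comm]

lemma Nat.add_two_le_choose_two {m : ℕ} (hm : 4 ≤ m) : m + 2 ≤ m.choose 2 := by
  induction m, hm using Nat.le_induction with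
  | base => decide
  | succ m _ ih =>
    rw [Nat.choose_two_succ]
    omega

lemma Finset.sum_range_tsub_const (n k : ℕ) : ∑ b ∈ range n, (b - k) = (n - k).choose 2 := by
  induction n with
  | zero => simp
  | succ n ih =>
    rw [sum_range_succ, ih]
    rcases lt_or_ge n k with h | h
    · rw [Nat.sub_eq_zero_of_le h.le, Nat.sub_eq_zero_of_le h]
      rfl
    · rw [Nat.succ_sub h, Nat.choose_two_succ]

lemma Finset.card_sym2_filter_not_isDiag_s6 [DecidableEq α] (s : Finset α) :
    #{p ∈ s.sym2 | ¬p.IsDiag} = (#s).choose 2 := by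
  rw [sym2_eq_image, Sym2.filter_image_mk_not_isDiag, Sym2.card_image_offDiag]

namespace ZMod

variable {n : ℕ}

lemma val_sub_eq_zero_iff {x y : ZMod n} : (x - y).val = 0 ↔ x = y := by
  rw [val_eq_zero, sub_eq_zero]

lemma val_add_natCast_sub {a : ℕ} (h : a < n) (v : ZMod n) : (v + (a : ZMod n) - v).val = a := by
  rw [add_sub_cancel_left, val_cast_of_lt h]

lemma add_natCast_inj {a b : ℕ} (ha : a < n) (hb : b < n) (v : ZMod n) :
    v + (a : ZMod n) = v + b ↔ a = b :=
  ⟨fun h => by rw [← val_add_natCast_sub ha v, h, val_add_natCast_sub hb v], by rintro rfl; rfl⟩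

variable [NeZero n]

lemma add_natCast_val_sub (x v : ZMod n) : v + ((x - v).val : ZMod n) = x := by
  rw [natCast_zmod_val, add_sub_cancel]

lemma val_sub_add_val_sub_of_le {x y z : ZMod n} (h : (y - z).val ≤ (x - z).val) :
    (x - y).val + (y - z).val = (x - z).val := by
  have := val_sub h
  rw [sub_sub_sub_cancel_right] at this
  omega

lemma val_sub_add_val_sub_of_lt {x y z : ZMod n} (h : (x - z).val < (y - z).val) :
    (x - y).val + (y - z).val = (x - z).val + n := by
  have hsum : x - y + (y - z) = x - z := sub_add_sub_cancel x y z
  rcases lt_or_ge ((x - y).val + (y - z).val) n with hlt | hge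
  · have := val_add_of_lt hlt
    rw [hsum] at this
    omega
  · have := val_add_of_le hge
    rw [hsum] at this
    omega

end ZMod

namespace Hypergraph'

lemma dist_eq_two_of_not_adj {H : Hypergraph' α} {x y : α} (hxy : x ≠ y)
    (hnadj : ¬H.twoSection.Adj x y) {p : H.twoSection.Walk x y} (hp : p.length ≤ 2) :
    H.dist x y = 2 := by
  have hne : H.dist x y ≠ 0 := SimpleGraph.dist_ne_zero_iff_ne_and_reachable.2 ⟨hxy, p.reachable⟩
  have hne1 : H.dist x y ≠ 1 := mt SimpleGraph.dist_eq_one_iff_adj.1 hnadj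
  have hle : H.dist x y ≤ 2 := (SimpleGraph.dist_le p).trans hp
  omega

variable [DecidableEq α]

@[simp] lemma delete_verts (H : Hypergraph' α) (v : α) : (H.delete v).verts = H.verts.erase v :=
  rfl

@[simp] lemma delete_edges (H : Hypergraph' α) (v : α) :
    (H.delete v).edges = {e ∈ H.edges | v ∉ e} :=
  rfl

open Classical in
noncomputable def nonAdjPairs (H : Hypergraph' α) : Finset (Sym2 α) :=
  {p ∈ H.verts.sym2 | p ∈ H.twoSectionᶜ.edgeSet}

theorem wiener_eq_of_forall_walk_length_le_two (H : Hypergraph' α)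
    (h : ∀ x ∈ H.verts, ∀ y ∈ H.verts, ∃ p : H.twoSection.Walk x y, p.length ≤ 2) :
    H.wiener = (#H.verts).choose 2 + #H.nonAdjPairs := by
  classical
  have hdist : ∀ p ∈ {p ∈ H.verts.sym2 | ¬p.IsDiag},
      Sym2.lift ⟨fun u v => H.dist u v, fun _ _ => SimpleGraph.dist_comm⟩ p =
        1 + if p ∈ H.twoSectionᶜ.edgeSet then 1 else 0 := by
    intro p hp
    induction p using Sym2.ind with | _ x y =>
    simp only [mem_filter, mk_mem_sym2_iff, Sym2.mk_isDiag_iff] at hp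
    obtain ⟨⟨hx, hy⟩, hxy⟩ := hp
    by_cases hadj : H.twoSection.Adj x y
    · simp only [Sym2.lift_mk, SimpleGraph.mem_edgeSet, SimpleGraph.compl_adj, hadj,
        not_true_eq_false, and_false, if_false, add_zero]
      exact SimpleGraph.dist_eq_one_iff_adj.2 hadj
    · obtain ⟨p, hp⟩ := h x hx y hy
      simp only [Sym2.lift_mk, SimpleGraph.mem_edgeSet, SimpleGraph.compl_adj, hadj]
      simp [hxy, dist_eq_two_of_not_adj hxy hadj hp]
  rw [Hypergraph'.wiener, sum_congr rfl hdist, sum_add_distrib, sum_const, smul_eq_mul, mul_one,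
    card_sym2_filter_not_isDiag_s6, sum_boole, filter_filter, Nat.cast_id, nonAdjPairs]
  congr 3
  ext p
  exact and_iff_right_of_imp fun hp => SimpleGraph.not_isDiag_of_mem_edgeSet _ hp

theorem wiener_eq_choose_of_forall_adj (H : Hypergraph' α)
    (hadj : ∀ x ∈ H.verts, ∀ y ∈ H.verts, x ≠ y → H.twoSection.Adj x y) :
    H.wiener = (#H.verts).choose 2 := by
  have hempty : H.nonAdjPairs = ∅ := by
    classical
    refine filter_false_of_mem fun p hp hcompl => ?_
    induction p using Sym2.ind with | _ x y =>
    rw [mk_mem_sym2_iff] at hp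
    rw [SimpleGraph.mem_edgeSet, SimpleGraph.compl_adj] at hcompl
    exact hcompl.2 (hadj x hp.1 y hp.2 hcompl.1)
  rw [wiener_eq_of_forall_walk_length_le_two H fun x hx y hy => ?_, hempty, card_empty, add_zero]
  obtain rfl | hxy := eq_or_ne x y
  · exact ⟨.nil, by simp⟩
  · exact ⟨(hadj x hx y hy hxy).toWalk, by simp⟩

theorem diam_eq_one_of_forall_adj (H : Hypergraph' α) (hcard : 2 ≤ #H.verts)
    (hadj : ∀ x ∈ H.verts, ∀ y ∈ H.verts, x ≠ y → H.twoSection.Adj x y) : H.diam = 1 := by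
  obtain ⟨x, hx, y, hy, hxy⟩ := one_lt_card.1 hcard
  apply le_antisymm
  · refine Finset.sup_le fun p hp => ?_
    obtain ⟨hp₁, hp₂, hne⟩ := mem_offDiag.1 hp
    exact (SimpleGraph.dist_eq_one_iff_adj.2 (hadj _ hp₁ _ hp₂ hne)).le
  · calc 1 = H.dist x y := (SimpleGraph.dist_eq_one_iff_adj.2 (hadj x hx y hy hxy)).symm
      _ ≤ H.diam :=
        le_sup (f := fun p => H.dist p.1 p.2) (b := (x, y)) (mem_offDiag.2 ⟨hx, hy, hxy⟩)

variable {n k : ℕ}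

def cyclicInterval (k : ℕ) (i : ZMod n) : Finset (ZMod n) :=
  univ.image fun j : Fin k => i + (j : ℕ)

lemma card_cyclicInterval (hkn : k ≤ n) (i : ZMod n) : #(cyclicInterval k i) = k := by
  refine (card_image_of_injective _ fun j j' h => Fin.ext ?_).trans (card_fin k)
  have := congrArg (fun z => (z - i).val) h
  simpa only [ZMod.val_add_natCast_sub ((Fin.is_lt _).trans_le hkn)] using this

variable [NeZero n]

lemma mem_cyclicInterval (hkn : k ≤ n) {i x : ZMod n} :
    x ∈ cyclicInterval k i ↔ (x - i).val < k := by
  simp only [cyclicInterval, mem_image, mem_univ, true_and]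
  constructor
  · rintro ⟨j, rfl⟩
    rw [ZMod.val_add_natCast_sub (j.2.trans_le hkn)]
    exact j.2
  · exact fun h => ⟨⟨_, h⟩, ZMod.add_natCast_val_sub x i⟩

variable {H : Hypergraph' (ZMod n)}

theorem twoSection_adj_of_ne (hkn : k ≤ n) (hnk : n < 2 * k)
    (hedges : H.edges = univ.image (cyclicInterval k)) {x y : ZMod n} (hxy : x ≠ y) :
    H.twoSection.Adj x y := by
  have hmem : ∀ i, cyclicInterval k i ∈ H.edges := fun i => hedges ▸ mem_image_of_mem _ (mem_univ i)
  have hyx : (y - x).val ≠ 0 := mt ZMod.val_sub_eq_zero_iff.1 hxy.symm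
  have hwrap := ZMod.val_sub_add_val_sub_of_lt (x := x) (y := y) (z := x)
    (by rw [sub_self, ZMod.val_zero]; omega)
  simp only [sub_self, ZMod.val_zero, zero_add] at hwrap
  refine ⟨hxy, ?_⟩
  rcases lt_or_ge (y - x).val k with h | h
  · refine ⟨_, hmem x, (mem_cyclicInterval hkn).2 ?_, (mem_cyclicInterval hkn).2 h⟩
    simp only [sub_self, ZMod.val_zero]
    omega
  · refine ⟨_, hmem y, (mem_cyclicInterval hkn).2 (by omega), (mem_cyclicInterval hkn).2 ?_⟩
    simp only [sub_self, ZMod.val_zero]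
    omega

theorem delete_twoSection_adj_iff (hkn : k < n) (hedges : H.edges = univ.image (cyclicInterval k))
    {v x y : ZMod n} (hx : x ≠ v) (hy : y ≠ v) :
    (H.delete v).twoSection.Adj x y ↔
      x ≠ y ∧ (x - v).val < (y - v).val + k ∧ (y - v).val < (x - v).val + k := by
  have hx0 : (x - v).val ≠ 0 := mt ZMod.val_sub_eq_zero_iff.1 hx
  have hy0 : (y - v).val ≠ 0 := mt ZMod.val_sub_eq_zero_iff.1 hy
  have hxn := ZMod.val_lt (x - v)
  have hyn := ZMod.val_lt (y - v)
  simp only [twoSection, delete_edges, mem_filter, hedges, mem_image, mem_univ, true_and]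
  constructor
  · rintro ⟨hxy, _, ⟨⟨i, rfl⟩, hvi⟩, hxi, hyi⟩
    rw [mem_cyclicInterval hkn.le] at hxi hyi hvi
    have hxwrap := ZMod.val_sub_add_val_sub_of_lt (y := v) (lt_of_lt_of_le hxi (not_lt.1 hvi))
    have hywrap := ZMod.val_sub_add_val_sub_of_lt (y := v) (lt_of_lt_of_le hyi (not_lt.1 hvi))
    exact ⟨hxy, by omega, by omega⟩
  · rintro ⟨hxy, hlt₁, hlt₂⟩
    -- the window starting at offset `s` from `v` avoids `v` and contains both vertices
    set s := min (min (x - v).val (y - v).val) (n - k)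
    have hsv := ZMod.val_add_natCast_sub (show s < n by omega) v
    have hvwrap := ZMod.val_sub_add_val_sub_of_lt (x := v) (y := v + (s : ZMod n)) (z := v)
      (by rw [hsv, sub_self, ZMod.val_zero]; omega)
    have hxs := ZMod.val_sub_add_val_sub_of_le (x := x) (y := v + (s : ZMod n)) (z := v)
      (by rw [hsv]; omega)
    have hys := ZMod.val_sub_add_val_sub_of_le (x := y) (y := v + (s : ZMod n)) (z := v)
      (by rw [hsv]; omega)
    rw [hsv] at hvwrap hxs hys
    rw [sub_self, ZMod.val_zero] at hvwrap
    refine ⟨hxy, _, ⟨⟨v + s, rfl⟩, ?_⟩, ?_, ?_⟩ <;> rw [mem_cyclicInterval hkn.le] <;> omega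

theorem delete_exists_walk_length_le_two (hkn : k < n) (hnk : n < 2 * k)
    (hedges : H.edges = univ.image (cyclicInterval k)) {v x y : ZMod n} (hx : x ≠ v)
    (hy : y ≠ v) : ∃ p : (H.delete v).twoSection.Walk x y, p.length ≤ 2 := by
  by_cases hxy : x = y
  · subst hxy
    exact ⟨.nil, by simp⟩
  by_cases hadj : (H.delete v).twoSection.Adj x y
  · exact ⟨hadj.toWalk, by simp⟩
  have hx0 : (x - v).val ≠ 0 := mt ZMod.val_sub_eq_zero_iff.1 hx
  have hy0 : (y - v).val ≠ 0 := mt ZMod.val_sub_eq_zero_iff.1 hy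
  have hxn := ZMod.val_lt (x - v)
  have hyn := ZMod.val_lt (y - v)
  have hfar : ¬((x - v).val < (y - v).val + k ∧ (y - v).val < (x - v).val + k) :=
    fun h => hadj ((delete_twoSection_adj_iff hkn hedges hx hy).2 ⟨hxy, h⟩)
  -- a common neighbour sits `k - 1` steps after the endpoint nearer to `v`
  obtain ⟨w, hw⟩ : ∃ w : ZMod n, (w - v).val = min (x - v).val (y - v).val + (k - 1) :=
    ⟨_, ZMod.val_add_natCast_sub (by omega) v⟩
  have hwv : w ≠ v := by
    rintro rfl
    simp only [sub_self, ZMod.val_zero] at hw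
    omega
  have hxw : (H.delete v).twoSection.Adj x w :=
    (delete_twoSection_adj_iff hkn hedges hx hwv).2 ⟨by rintro rfl; omega, by omega, by omega⟩
  have hwy : (H.delete v).twoSection.Adj w y :=
    (delete_twoSection_adj_iff hkn hedges hwv hy).2 ⟨by rintro rfl; omega, by omega, by omega⟩
  exact ⟨.cons hxw (.cons hwy .nil), by simp⟩

theorem mk_mem_delete_nonAdjPairs_iff (hk : 0 < k) (hkn : k < n) (hverts : H.verts = univ)
    (hedges : H.edges = univ.image (cyclicInterval k)) {v x y : ZMod n} :
    s(x, y) ∈ (H.delete v).nonAdjPairs ↔ 0 < (x - v).val ∧ 0 < (y - v).val ∧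
      ((x - v).val + k ≤ (y - v).val ∨ (y - v).val + k ≤ (x - v).val) := by
  simp only [nonAdjPairs, mem_filter, mk_mem_sym2_iff, delete_verts, hverts, mem_erase, mem_univ,
    and_true, SimpleGraph.mem_edgeSet, SimpleGraph.compl_adj, pos_iff_ne_zero, ne_eq,
    ZMod.val_sub_eq_zero_iff]
  constructor
  · rintro ⟨⟨hx, hy⟩, hxy, hnadj⟩
    rw [delete_twoSection_adj_iff hkn hedges hx hy] at hnadj
    refine ⟨hx, hy, ?_⟩
    by_contra hnear
    exact hnadj ⟨hxy, by omega, by omega⟩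
  · rintro ⟨hx, hy, hfar⟩
    rw [delete_twoSection_adj_iff hkn hedges hx hy]
    refine ⟨⟨hx, hy⟩, by rintro rfl; omega, ?_⟩
    rintro ⟨-, h₁, h₂⟩
    omega

theorem delete_nonAdjPairs_eq_image (hk : 0 < k) (hkn : k < n) (hverts : H.verts = univ)
    (hedges : H.edges = univ.image (cyclicInterval k)) (v : ZMod n) :
    (H.delete v).nonAdjPairs = ((range n).sigma fun b => Icc 1 (b - k)).image
      fun q => s(v + (q.2 : ℕ), v + (q.1 : ℕ)) := by
  ext p
  induction p using Sym2.ind with | _ x y =>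
  simp only [mk_mem_delete_nonAdjPairs_iff hk hkn hverts hedges, mem_image, mem_sigma, mem_range,
    mem_Icc, Sigma.exists]
  constructor
  · rintro ⟨hx, hy, hfar | hfar⟩
    · refine ⟨(y - v).val, (x - v).val, ⟨ZMod.val_lt _, by omega, by omega⟩, ?_⟩
      simp only [ZMod.add_natCast_val_sub]
    · refine ⟨(x - v).val, (y - v).val, ⟨ZMod.val_lt _, by omega, by omega⟩, ?_⟩
      simp only [ZMod.add_natCast_val_sub, Sym2.eq_swap]
  · rintro ⟨b, a, ⟨hb, ha, hab⟩, hpair⟩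
    have hva := ZMod.val_add_natCast_sub (show a < n by omega) v
    have hvb := ZMod.val_add_natCast_sub hb v
    rcases Sym2.eq_iff.1 hpair with ⟨rfl, rfl⟩ | ⟨rfl, rfl⟩ <;> rw [hva, hvb] <;> omega

theorem card_delete_nonAdjPairs (hk : 0 < k) (hkn : k < n) (hverts : H.verts = univ)
    (hedges : H.edges = univ.image (cyclicInterval k)) (v : ZMod n) :
    #(H.delete v).nonAdjPairs = (n - k).choose 2 := by
  rw [delete_nonAdjPairs_eq_image hk hkn hverts hedges, card_image_of_injOn, card_sigma]
  · simp only [Nat.card_Icc, add_tsub_cancel_right]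
    exact sum_range_tsub_const n k
  rintro ⟨b, a⟩ hq ⟨b', a'⟩ hq' hpair
  simp only [coe_sigma, Set.mem_sigma_iff, coe_range, Set.mem_Iio, coe_Icc, Set.mem_Icc] at hq hq'
  rcases Sym2.eq_iff.1 (show s(v + (a : ZMod n), v + (b : ZMod n)) = s(v + a', v + b') from hpair)
    with ⟨h₁, h₂⟩ | ⟨h₁, h₂⟩
  · obtain rfl := (ZMod.add_natCast_inj (by omega) (by omega) v).1 h₁
    obtain rfl := (ZMod.add_natCast_inj hq.1 hq'.1 v).1 h₂
    rfl
  · have := (ZMod.add_natCast_inj (by omega) hq'.1 v).1 h₁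
    have := (ZMod.add_natCast_inj hq.1 (by omega) v).1 h₂
    omega

end Hypergraph'

open Hypergraph'

theorem stmt6 (m : ℕ) (hm : 4 ≤ m)
    (H : Hypergraph' (ZMod ((m + 1).choose 2 + 1)))
    (hverts : H.verts = Finset.univ)
    (hedges : H.edges = Finset.image
      (fun i : ZMod ((m + 1).choose 2 + 1) =>
        Finset.image
          (fun j : Fin (m.choose 2) => i + ((j : ℕ) : ZMod ((m + 1).choose 2 + 1)))
          Finset.univ)
      Finset.univ) :
    H.IsSoltes ∧ (∀ e ∈ H.edges, e.card = m.choose 2) ∧ H.diam = 1 ∧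
      H.wiener = ((m + 1).choose 2 + 1).choose 2 ∧
      ∀ v ∈ H.verts,
        (H.delete v).wiener = ((m + 1).choose 2).choose 2 + (m + 1).choose 2 := by
  have hsucc := Nat.choose_two_succ m
  have hk := Nat.add_two_le_choose_two hm
  have hkn : m.choose 2 < (m + 1).choose 2 + 1 := by omega
  have hnk : (m + 1).choose 2 + 1 < 2 * m.choose 2 := by omega
  have hcard : #H.verts = (m + 1).choose 2 + 1 := by rw [hverts, card_univ, ZMod.card]
  have hadj : ∀ x ∈ H.verts, ∀ y ∈ H.verts, x ≠ y → H.twoSection.Adj x y :=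
    fun _ _ _ _ => twoSection_adj_of_ne hkn.le hnk hedges
  have hwalk (v) : ∀ x ∈ (H.delete v).verts, ∀ y ∈ (H.delete v).verts,
      ∃ p : (H.delete v).twoSection.Walk x y, p.length ≤ 2 := fun x hx y hy =>
    delete_exists_walk_length_le_two hkn hnk hedges (mem_erase.1 hx).1 (mem_erase.1 hy).1
  have hwiener : H.wiener = ((m + 1).choose 2 + 1).choose 2 := by
    rw [H.wiener_eq_choose_of_forall_adj hadj, hcard]
  have hwiener_delete (v) :
      (H.delete v).wiener = ((m + 1).choose 2).choose 2 + (m + 1).choose 2 := by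
    rw [wiener_eq_of_forall_walk_length_le_two _ (hwalk v),
      card_delete_nonAdjPairs (by omega) hkn hverts hedges, delete_verts,
      card_erase_of_mem (hverts ▸ mem_univ v), hcard, Nat.add_sub_cancel]
    congr 2
    omega
  refine ⟨⟨by omega, ?_, fun v _ => ⟨?_, ?_⟩⟩, ?_, H.diam_eq_one_of_forall_adj (by omega) hadj,
    hwiener, fun v _ => hwiener_delete v⟩
  · intro x hx y hy
    obtain rfl | hxy := eq_or_ne x y
    exacts [.refl x, (hadj x hx y hy hxy).reachable]
  · intro x hx y hy
    exact (hwalk v x hx y hy).elim fun p _ => p.reachable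
  · rw [hwiener_delete, hwiener, Nat.choose_two_succ ((m + 1).choose 2)]
  · intro e he
    obtain ⟨i, -, rfl⟩ := mem_image.1 (hedges ▸ he)
    exact card_cyclicInterval hkn.le i
end

section
/- The 6-uniform hypergraph H on vertex set {0,1,...,11} with edge set {{0,1,2,3,4,5}, {0,1,6,7,8,9}, {2,3,6,7,10,11}, {4,5,8,9,10,11}, {0,2,4,6,8,10}, {1,3,5,7,9,11}} is a Šoltés hypergraph of diameter 2. -/
/-!
Each vertex `v` lies in three edges whose union misses only `11 - v`; so any two vertices are
adjacent or have a common neighbour, and `W(H) = 66 + 6 = 72`, the six pairs `{v, 11 - v}`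
being at distance 2. Deleting `v` leaves the three edges through `11 - v`, which makes `11 - v`
adjacent to every other vertex; these edges cover 38 of the 55 pairs, so
`W(H \ v) = 38 + 2 * 17 = 72`. With all distances at most 2 the Wiener index depends on
adjacency only, and the finitely many adjacencies are checked by evaluation.
-/

variable {α : Type*} {β : Type*}

/-- A hypergraph: a finite vertex set together with a set of edges,
each an at-least-2-element subset of the vertex set. -/
structure HypergraphS (α : Type*) where
  verts : Finset α
  edges : Finset (Finset α)
  edge_sub : ∀ e ∈ edges, e ⊆ verts
  edge_card : ∀ e ∈ edges, 2 ≤ e.card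

namespace HypergraphS

/-- The 2-section graph of a hypergraph: two distinct vertices are adjacent
iff some edge contains both. -/
def twoSection (H : HypergraphS α) : SimpleGraph α where
  Adj u v := u ≠ v ∧ ∃ e ∈ H.edges, u ∈ e ∧ v ∈ e
  symm := by
    constructor
    rintro u v ⟨huv, e, he, hu, hv⟩
    exact ⟨huv.symm, e, he, hv, hu⟩
  loopless := by
    constructor
    rintro u ⟨h, -⟩
    exact h rfl

/-- Distance between two vertices: graph distance in the 2-section. -/
noncomputable def dist (H : HypergraphS α) (u v : α) : ℕ :=
  H.twoSection.dist u v

/-- A hypergraph is connected if every two of its vertices are joined by a path. -/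
def Connected (H : HypergraphS α) : Prop :=
  ∀ u ∈ H.verts, ∀ v ∈ H.verts, H.twoSection.Reachable u v

/-- The Wiener index (total distance): the sum of distances over all
unordered pairs of distinct vertices. -/
noncomputable def wiener [DecidableEq α] (H : HypergraphS α) : ℕ :=
  ∑ p ∈ H.verts.sym2.filter (fun p => ¬ p.IsDiag),
    Sym2.lift ⟨fun u v => H.dist u v, fun _ _ => SimpleGraph.dist_comm⟩ p

/-- Vertex deletion: remove the vertex and all edges containing it. -/
def delete [DecidableEq α] (H : HypergraphS α) (v : α) : HypergraphS α where
  verts := H.verts.erase v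
  edges := H.edges.filter fun e => v ∉ e
  edge_sub := by
    intro e he x hx
    rw [Finset.mem_filter] at he
    exact Finset.mem_erase.mpr ⟨fun h => he.2 (h ▸ hx), H.edge_sub e he.1 hx⟩
  edge_card := fun e he => H.edge_card e (Finset.mem_filter.mp he).1

/-- A Šoltés hypergraph: a connected hypergraph on at least 2 vertices such that
deleting any vertex leaves a connected hypergraph with the same Wiener index. -/
def IsSoltes [DecidableEq α] (H : HypergraphS α) : Prop :=
  2 ≤ H.verts.card ∧ H.Connected ∧
    ∀ v ∈ H.verts, (H.delete v).Connected ∧ (H.delete v).wiener = H.wiener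

/-- The diameter: the maximum distance over unordered pairs of distinct vertices. -/
noncomputable def diam [DecidableEq α] (H : HypergraphS α) : ℕ :=
  H.verts.offDiag.sup fun p => H.dist p.1 p.2

/-- The degree of a vertex: the number of edges containing it. -/
def degree [DecidableEq α] (H : HypergraphS α) (v : α) : ℕ :=
  (H.edges.filter fun e => v ∈ e).card

/-- HypergraphS isomorphism: a bijection between the vertex sets mapping
edges onto edges. -/
def IsIsoTo [DecidableEq β] (H : HypergraphS α) (H' : HypergraphS β) : Prop :=
  ∃ f : α → β, Set.InjOn f ↑H.verts ∧ H'.verts = H.verts.image f ∧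
    H'.edges = H.edges.image fun e => e.image f

end HypergraphS

def sixUniformTwelve : HypergraphS (Fin 12) where
  verts := Finset.univ
  edges := {{0, 1, 2, 3, 4, 5}, {0, 1, 6, 7, 8, 9}, {2, 3, 6, 7, 10, 11},
            {4, 5, 8, 9, 10, 11}, {0, 2, 4, 6, 8, 10}, {1, 3, 5, 7, 9, 11}}
  edge_sub := fun e _ => e.subset_univ
  edge_card := by
    intro e he
    fin_cases he <;> decide

namespace SimpleGraph

variable {V : Type*} {G : SimpleGraph V} {u v : V}

lemma dist_eq_two_of_not_adj (huv : u ≠ v) (hadj : ¬ G.Adj u v)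
    (hc : (G.commonNeighbors u v).Nonempty) : G.dist u v = 2 := by
  rw [dist, edist_eq_two_iff.mpr ⟨huv, hadj, hc⟩]
  rfl

lemma dist_eq_ite_adj [DecidableRel G.Adj] (huv : u ≠ v)
    (h : G.Adj u v ∨ (G.commonNeighbors u v).Nonempty) :
    G.dist u v = if G.Adj u v then 1 else 2 := by
  split_ifs with hadj
  · exact dist_eq_one_iff_adj.mpr hadj
  · exact dist_eq_two_of_not_adj huv hadj (h.resolve_left hadj)

end SimpleGraph

namespace HypergraphS

variable (H : HypergraphS α)

instance [DecidableEq α] : DecidableRel H.twoSection.Adj :=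
  fun u v => decidable_of_iff (u ≠ v ∧ ∃ e ∈ H.edges, u ∈ e ∧ v ∈ e) Iff.rfl

def DistLeTwo : Prop :=
  ∀ u ∈ H.verts, ∀ v ∈ H.verts, u ≠ v →
    H.twoSection.Adj u v ∨ ∃ w ∈ H.verts, H.twoSection.Adj u w ∧ H.twoSection.Adj w v

instance [DecidableEq α] : Decidable H.DistLeTwo := by
  unfold DistLeTwo
  infer_instance

/-- The Wiener index with every non-adjacent pair counted at distance 2; computable,
unlike `wiener`. -/
def wienerTrunc [DecidableEq α] : ℕ :=
  ∑ p ∈ H.verts.sym2.filter (fun p => ¬ p.IsDiag),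
    Sym2.lift ⟨fun u v => if H.twoSection.Adj u v then 1 else 2,
      fun _ _ => if_congr (SimpleGraph.adj_comm _ _ _) rfl rfl⟩ p

namespace DistLeTwo

variable {H}

lemma connected (hH : H.DistLeTwo) : H.Connected := by
  intro u hu v hv
  rcases eq_or_ne u v with rfl | huv
  · rfl
  rcases hH u hu v hv huv with hadj | ⟨w, -, huw, hwv⟩
  · exact hadj.reachable
  · exact huw.reachable.trans hwv.reachable

lemma dist_eq [DecidableEq α] {u v : α} (hH : H.DistLeTwo) (hu : u ∈ H.verts)
    (hv : v ∈ H.verts) (huv : u ≠ v) : H.dist u v = if H.twoSection.Adj u v then 1 else 2 := by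
  refine SimpleGraph.dist_eq_ite_adj huv ?_
  rcases hH u hu v hv huv with hadj | ⟨w, -, huw, hwv⟩
  · exact Or.inl hadj
  · exact Or.inr ⟨w, huw, hwv.symm⟩

lemma wiener_eq [DecidableEq α] (hH : H.DistLeTwo) : H.wiener = H.wienerTrunc := by
  refine Finset.sum_congr rfl fun p hp => ?_
  induction p with
  | _ u v =>
    obtain ⟨⟨hu, hv⟩, hdiag⟩ := by
      simpa only [Finset.mem_filter, Finset.mk_mem_sym2_iff] using hp
    exact hH.dist_eq hu hv (by simpa using hdiag)

lemma diam_eq_two [DecidableEq α] (hH : H.DistLeTwo) {u v : α} (hu : u ∈ H.verts)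
    (hv : v ∈ H.verts) (huv : u ≠ v) (hadj : ¬ H.twoSection.Adj u v) : H.diam = 2 := by
  refine le_antisymm (Finset.sup_le fun p hp => ?_) ?_
  · obtain ⟨hp₁, hp₂, hp⟩ := Finset.mem_offDiag.mp hp
    rw [hH.dist_eq hp₁ hp₂ hp]
    split_ifs <;> omega
  · calc 2 = H.dist u v := by rw [hH.dist_eq hu hv huv, if_neg hadj]
      _ ≤ H.diam := Finset.le_sup (f := fun p : α × α => H.dist p.1 p.2) (b := (u, v))
          (Finset.mem_offDiag.mpr ⟨hu, hv, huv⟩)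

end DistLeTwo

lemma isSoltes_of_distLeTwo [DecidableEq α] (hcard : 2 ≤ H.verts.card) (hH : H.DistLeTwo)
    (hdel : ∀ v ∈ H.verts,
      (H.delete v).DistLeTwo ∧ (H.delete v).wienerTrunc = H.wienerTrunc) :
    H.IsSoltes := by
  refine ⟨hcard, hH.connected, fun v hv => ?_⟩
  obtain ⟨hHv, hw⟩ := hdel v hv
  exact ⟨hHv.connected, by rw [hHv.wiener_eq, hH.wiener_eq, hw]⟩

end HypergraphS

theorem stmt12 : sixUniformTwelve.IsSoltes ∧ sixUniformTwelve.diam = 2 := by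
  have hH : sixUniformTwelve.DistLeTwo := by decide
  have hdel : ∀ v, (sixUniformTwelve.delete v).DistLeTwo := by decide
  have hw : ∀ v, (sixUniformTwelve.delete v).wienerTrunc = sixUniformTwelve.wienerTrunc := by
    decide
  exact ⟨sixUniformTwelve.isSoltes_of_distLeTwo (by decide) hH fun v _ => ⟨hdel v, hw v⟩,
    hH.diam_eq_two (u := 0) (v := 11) (by decide) (by decide) (by decide) (by decide)⟩
end

section
/- There is no Šoltés hypergraph with at most 4 edges. -/
variable {α : Type*} {β : Type*}

/-- A hypergraph: a finite vertex set together with a set of edges,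
each an at-least-2-element subset of the vertex set. -/
structure SHypergraph (α : Type*) where
  verts : Finset α
  edges : Finset (Finset α)
  edge_sub : ∀ e ∈ edges, e ⊆ verts
  edge_card : ∀ e ∈ edges, 2 ≤ e.card

namespace SHypergraph

/-- The 2-section graph of a hypergraph: two distinct vertices are adjacent
iff some edge contains both. -/
def twoSection (H : SHypergraph α) : SimpleGraph α where
  Adj u v := u ≠ v ∧ ∃ e ∈ H.edges, u ∈ e ∧ v ∈ e
  symm := ⟨by
    rintro u v ⟨huv, e, he, hu, hv⟩
    exact ⟨huv.symm, e, he, hv, hu⟩⟩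
  loopless := ⟨by
    rintro u ⟨h, -⟩
    exact h rfl⟩

/-- Distance between two vertices: graph distance in the 2-section. -/
noncomputable def dist (H : SHypergraph α) (u v : α) : ℕ :=
  H.twoSection.dist u v

/-- A hypergraph is connected if every two of its vertices are joined by a path. -/
def Connected (H : SHypergraph α) : Prop :=
  ∀ u ∈ H.verts, ∀ v ∈ H.verts, H.twoSection.Reachable u v

/-- The Wiener index (total distance): the sum of distances over all
unordered pairs of distinct vertices. -/
noncomputable def wiener [DecidableEq α] (H : SHypergraph α) : ℕ :=
  ∑ p ∈ H.verts.sym2.filter (fun p => ¬ p.IsDiag),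
    Sym2.lift ⟨fun u v => H.dist u v, fun _ _ => SimpleGraph.dist_comm⟩ p

/-- Vertex deletion: remove the vertex and all edges containing it. -/
def delete [DecidableEq α] (H : SHypergraph α) (v : α) : SHypergraph α where
  verts := H.verts.erase v
  edges := H.edges.filter fun e => v ∉ e
  edge_sub := by
    intro e he x hx
    rw [Finset.mem_filter] at he
    exact Finset.mem_erase.mpr ⟨fun h => he.2 (h ▸ hx), H.edge_sub e he.1 hx⟩
  edge_card := fun e he => H.edge_card e (Finset.mem_filter.mp he).1

/-- A Šoltés hypergraph: a connected hypergraph on at least 2 vertices such that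
deleting any vertex leaves a connected hypergraph with the same Wiener index. -/
def IsSoltes [DecidableEq α] (H : SHypergraph α) : Prop :=
  2 ≤ H.verts.card ∧ H.Connected ∧
    ∀ v ∈ H.verts, (H.delete v).Connected ∧ (H.delete v).wiener = H.wiener

/-- The diameter: the maximum distance over unordered pairs of distinct vertices. -/
noncomputable def diam [DecidableEq α] (H : SHypergraph α) : ℕ :=
  H.verts.offDiag.sup fun p => H.dist p.1 p.2

/-- The degree of a vertex: the number of edges containing it. -/
def degree [DecidableEq α] (H : SHypergraph α) (v : α) : ℕ :=
  (H.edges.filter fun e => v ∈ e).card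

/-- SHypergraph isomorphism: a bijection between the vertex sets mapping
edges onto edges. -/
def IsIsoTo [DecidableEq β] (H : SHypergraph α) (H' : SHypergraph β) : Prop :=
  ∃ f : α → β, Set.InjOn f ↑H.verts ∧ H'.verts = H.verts.image f ∧
    H'.edges = H.edges.image fun e => e.image f

end SHypergraph

/-!
Counting ordered pairs, `2 W(H) = ∑_{u, w ≠ v} d(u, w) + 2 ∑_u d(u, v)`, so `W(H - v) < W(H)`
as soon as every `u ≠ v` gains in `H - v` at most `d(u, v)` in total distance to the other
remaining vertices. For a Šoltés hypergraph this first shows that every `H - v` keeps at least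
two edges. With at most four edges, some vertex `v` then lies in two edges, so `H - v` has exactly
two edges, which must meet: `H - v` has diameter at most two. Moreover two edges share at most
one vertex and every edge through `v` has at most three vertices, so in `H - v` a vertex `u ≠ v`
moves away only from the at most one other vertex sharing an edge with `u` and `v`, and only by
one, which is at most `d(u, v) = 1`.
-/

lemma Finset.two_nsmul_sum_sym2_filter_not_isDiag {M : Type*} [DecidableEq α] [AddCommMonoid M]
    (s : Finset α) (f : α → α → M) (hf : ∀ a b, f a b = f b a) (hf0 : ∀ a, f a a = 0) :
    2 • ∑ z ∈ s.sym2 with ¬ z.IsDiag, Sym2.lift ⟨f, hf⟩ z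
      = ∑ a ∈ s, ∑ b ∈ s, f a b := by
  rw [Finset.sum_filter_of_ne]
  swap
  · intro z _ hz hdiag
    induction z with
    | h a b =>
      rw [Sym2.mk_isDiag_iff] at hdiag
      subst hdiag
      exact hz (hf0 a)
  induction s using Finset.cons_induction with
  | empty => simp
  | cons a s ha ih =>
    rw [Finset.sym2_cons, Finset.sum_disjUnion, Finset.sum_map, smul_add, ih]
    simp [Finset.sum_insert ha, Finset.sum_add_distrib, hf0, hf _ a, two_nsmul]
    abel

namespace SHypergraph

variable {H : SHypergraph α} {c d e f g : Finset α} {u v w m : α}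

lemma adj_of_mem (he : e ∈ H.edges) (hu : u ∈ e) (hw : w ∈ e) (huw : u ≠ w) :
    H.twoSection.Adj u w :=
  ⟨huw, e, he, hu, hw⟩

lemma reachable_of_mem (he : e ∈ H.edges) (hu : u ∈ e) (hw : w ∈ e) :
    H.twoSection.Reachable u w := by
  by_cases huw : u = w
  · exact huw ▸ SimpleGraph.Reachable.refl u
  · exact (adj_of_mem he hu hw huw).reachable

lemma dist_le_one_of_mem (he : e ∈ H.edges) (hu : u ∈ e) (hw : w ∈ e) : H.dist u w ≤ 1 := by
  by_cases huw : u = w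
  · simp [dist, huw]
  · exact (SimpleGraph.dist_eq_one_iff_adj.mpr (adj_of_mem he hu hw huw)).le

lemma dist_le_two_of_mem (he : e ∈ H.edges) (hf : f ∈ H.edges) (hu : u ∈ e) (hme : m ∈ e)
    (hmf : m ∈ f) (hw : w ∈ f) : H.dist u w ≤ 2 :=
  calc H.dist u w ≤ H.dist u m + H.dist m w :=
        (reachable_of_mem hf hmf hw).dist_triangle_right u
    _ ≤ 1 + 1 := add_le_add (dist_le_one_of_mem he hu hme) (dist_le_one_of_mem hf hmf hw)

lemma mem_of_reachable (hc : ∀ e ∈ H.edges, ∀ x ∈ e, x ∈ c → e ⊆ c)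
    (h : H.twoSection.Reachable u w) (hu : u ∈ c) : w ∈ c := by
  obtain ⟨p⟩ := h
  induction p with
  | nil => exact hu
  | cons hadj _ ih =>
    obtain ⟨-, e, he, hx, hy⟩ := hadj
    exact ih (hc e he _ hx hu hy)

lemma exists_mem_edges_of_reachable (h : H.twoSection.Reachable u w) (huw : u ≠ w) :
    ∃ e ∈ H.edges, u ∈ e := by
  obtain ⟨p⟩ := h
  cases p with
  | nil => exact absurd rfl huw
  | cons hadj _ =>
    obtain ⟨-, e, he, hu, -⟩ := hadj
    exact ⟨e, he, hu⟩

lemma Connected.exists_not_disjoint (hH : H.Connected) (he : e ∈ H.edges) (hf : f ∈ H.edges)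
    (hef : e ≠ f) : ∃ g ∈ H.edges, g ≠ e ∧ ¬ Disjoint e g := by
  by_contra! hdisj
  obtain ⟨x, hx⟩ := e.card_pos.mp (zero_lt_two.trans_le (H.edge_card e he))
  obtain ⟨y, hy⟩ := f.card_pos.mp (zero_lt_two.trans_le (H.edge_card f hf))
  have hclosed : ∀ g ∈ H.edges, ∀ t ∈ g, t ∈ e → g ⊆ e := by
    intro g hg t htg hte
    by_cases hge : g = e
    · exact hge.le
    · exact absurd htg (Finset.disjoint_left.mp (hdisj g hg hge) hte)
  have hye : y ∈ e :=
    mem_of_reachable hclosed (hH x (H.edge_sub e he hx) y (H.edge_sub f hf hy)) hx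
  exact Finset.disjoint_left.mp (hdisj f hf hef.symm) hye hy

variable [DecidableEq α]

lemma two_mul_wiener (H : SHypergraph α) :
    2 * H.wiener = ∑ u ∈ H.verts, ∑ w ∈ H.verts, H.dist u w := by
  rw [wiener, ← smul_eq_mul]
  exact Finset.two_nsmul_sum_sym2_filter_not_isDiag _ _ _ fun _ => SimpleGraph.dist_self

lemma two_mul_wiener_eq_sum_erase_add (hv : v ∈ H.verts) :
    2 * H.wiener = ∑ u ∈ H.verts.erase v, ∑ w ∈ H.verts.erase v, H.dist u w
      + 2 * ∑ u ∈ H.verts.erase v, H.dist u v := by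
  simp only [two_mul_wiener, ← Finset.add_sum_erase _ _ hv, Finset.sum_add_distrib, dist,
    SimpleGraph.dist_self, SimpleGraph.dist_comm (u := v)]
  ring

lemma wiener_delete_lt (hH : H.Connected) (hv : v ∈ H.verts) (hcard : 2 ≤ H.verts.card)
    (h : ∀ u ∈ H.verts.erase v, ∑ w ∈ H.verts.erase v, (H.delete v).dist u w
      ≤ ∑ w ∈ H.verts.erase v, H.dist u w + H.dist u v) :
    (H.delete v).wiener < H.wiener := by
  obtain ⟨u, hu, huv⟩ := Finset.exists_mem_ne hcard v
  have hpos : 0 < ∑ u ∈ H.verts.erase v, H.dist u v :=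
    Finset.sum_pos' (fun _ _ => Nat.zero_le _)
      ⟨u, Finset.mem_erase.mpr ⟨huv, hu⟩, (hH u hu v hv).pos_dist_of_ne huv⟩
  have hdel : 2 * (H.delete v).wiener
      ≤ ∑ u ∈ H.verts.erase v, ∑ w ∈ H.verts.erase v, H.dist u w
        + ∑ u ∈ H.verts.erase v, H.dist u v := by
    rw [two_mul_wiener, ← Finset.sum_add_distrib]
    exact Finset.sum_le_sum h
  have := two_mul_wiener_eq_sum_erase_add hv
  omega

lemma wiener_delete_lt_of_dist_delete_le (hH : H.Connected) (hv : v ∈ H.verts)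
    (hcard : 2 ≤ H.verts.card)
    (h : ∀ u ∈ H.verts.erase v, ∀ w ∈ H.verts.erase v,
      (H.delete v).dist u w ≤ H.dist u w) :
    (H.delete v).wiener < H.wiener :=
  wiener_delete_lt hH hv hcard fun u hu =>
    le_add_right (Finset.sum_le_sum fun w hw => h u hu w hw)

lemma dist_delete_le_dist_add (hd : (H.delete v).dist u w ≤ 2)
    (hr : H.twoSection.Reachable u w) :
    (H.delete v).dist u w ≤ H.dist u w +
      if u ≠ w ∧ ∃ e ∈ H.edges, v ∈ e ∧ u ∈ e ∧ w ∈ e then 1 else 0 := by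
  by_cases huw : u = w
  · simp [huw, dist]
  have hpos : 1 ≤ H.dist u w := hr.pos_dist_of_ne huw
  split_ifs with hshare
  · omega
  rcases hpos.eq_or_lt with h1 | h2
  · obtain ⟨-, e, he, hue, hwe⟩ := SimpleGraph.dist_eq_one_iff_adj.mp h1.symm
    have hve : v ∉ e := fun hve => hshare ⟨huw, e, he, hve, hue, hwe⟩
    have : (H.delete v).dist u w ≤ 1 :=
      dist_le_one_of_mem (Finset.mem_filter.mpr ⟨he, hve⟩) hue hwe
    omega
  · omega

lemma IsSoltes.three_le_card_verts (hS : H.IsSoltes) : 3 ≤ H.verts.card := by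
  obtain ⟨v, hv⟩ := Finset.card_pos.mp (zero_lt_two.trans_le hS.1)
  by_contra! h3
  have hle : (H.verts.erase v).card ≤ 1 := by rw [Finset.card_erase_of_mem hv]; omega
  refine (hS.2.2 v hv).2.not_lt
    (wiener_delete_lt_of_dist_delete_le hS.2.1 hv hS.1 fun u hu w hw => ?_)
  rw [Finset.card_le_one.mp hle u hu w hw]
  simp [dist]

lemma IsSoltes.exists_mem_delete_edges (hS : H.IsSoltes) (hv : v ∈ H.verts) (hu : u ∈ H.verts)
    (huv : u ≠ v) : ∃ e ∈ (H.delete v).edges, u ∈ e := by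
  have hu' : u ∈ (H.delete v).verts := Finset.mem_erase.mpr ⟨huv, hu⟩
  have hcard : 1 < (H.delete v).verts.card := by
    have := hS.three_le_card_verts
    simp only [delete, Finset.card_erase_of_mem hv]
    omega
  obtain ⟨t, ht, htu⟩ := Finset.exists_mem_ne hcard u
  exact exists_mem_edges_of_reachable ((hS.2.2 v hv).1 u hu' t ht) htu.symm

lemma IsSoltes.two_le_card_delete_edges (hS : H.IsSoltes) (hv : v ∈ H.verts) :
    2 ≤ (H.delete v).edges.card := by
  by_contra! h1
  refine (hS.2.2 v hv).2.not_lt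
    (wiener_delete_lt_of_dist_delete_le hS.2.1 hv hS.1 fun u hu w hw => ?_)
  by_cases huw : u = w
  · simp [huw, dist]
  have hr := (hS.2.2 v hv).1 u hu w hw
  obtain ⟨e, he, hue⟩ := exists_mem_edges_of_reachable hr huw
  obtain ⟨f, hf, hwf⟩ := exists_mem_edges_of_reachable hr.symm (Ne.symm huw)
  have hef : e = f := Finset.card_le_one.mp (by omega) e he f hf
  calc (H.delete v).dist u w ≤ 1 := dist_le_one_of_mem he hue (hef ▸ hwf)
    _ ≤ H.dist u w := (hS.2.1 u (Finset.mem_of_mem_erase hu) w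
        (Finset.mem_of_mem_erase hw)).pos_dist_of_ne huw

lemma IsSoltes.exists_mem_mem (hS : H.IsSoltes) :
    ∃ v e f, e ∈ H.edges ∧ f ∈ H.edges ∧ e ≠ f ∧ v ∈ e ∧ v ∈ f := by
  obtain ⟨u, hu⟩ := Finset.card_pos.mp (zero_lt_two.trans_le hS.1)
  have hcard : 1 < H.edges.card :=
    lt_of_lt_of_le (hS.two_le_card_delete_edges hu) (Finset.card_filter_le _ _)
  obtain ⟨e, he, f, hf, hef⟩ := Finset.one_lt_card.mp hcard
  obtain ⟨g, hg, hge, hnd⟩ := hS.2.1.exists_not_disjoint he hf hef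
  obtain ⟨v, hve, hvg⟩ := Finset.not_disjoint_iff.mp hnd
  exact ⟨v, e, g, he, hg, hge.symm, hve, hvg⟩

lemma IsSoltes.eq_or_eq_of_mem (hS : H.IsSoltes) (hle : H.edges.card ≤ 4) (he : e ∈ H.edges)
    (hf : f ∈ H.edges) (hg : g ∈ H.edges) (hef : e ≠ f) (hwe : w ∈ e) (hwf : w ∈ f)
    (hwg : w ∈ g) : g = e ∨ g = f := by
  by_contra! hg'
  have hsum : (H.edges.filter (w ∈ ·)).card + (H.delete w).edges.card = H.edges.card :=
    Finset.card_filter_add_card_filter_not _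
  have h2 := hS.two_le_card_delete_edges (H.edge_sub e he hwe)
  have h3 : 2 < (H.edges.filter (w ∈ ·)).card :=
    Finset.two_lt_card.mpr ⟨e, by simp [he, hwe], f, by simp [hf, hwf], g, by simp [hg, hwg],
      hef, hg'.1.symm, hg'.2.symm⟩
  omega

lemma IsSoltes.card_inter_le_one (hS : H.IsSoltes) (hle : H.edges.card ≤ 4) (he : e ∈ H.edges)
    (hf : f ∈ H.edges) (hef : e ≠ f) : (e ∩ f).card ≤ 1 := by
  refine Finset.card_le_one.mpr fun u hu w hw => ?_
  by_contra huw
  rw [Finset.mem_inter] at hu hw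
  obtain ⟨g, hg, hug⟩ :=
    hS.exists_mem_delete_edges (H.edge_sub e he hw.1) (H.edge_sub e he hu.1) huw
  obtain ⟨hg, hwg⟩ := Finset.mem_filter.mp hg
  rcases hS.eq_or_eq_of_mem hle he hf hg hef hu.1 hu.2 hug with rfl | rfl
  · exact hwg hw.1
  · exact hwg hw.2

lemma IsSoltes.exists_delete_edges_eq_pair (hS : H.IsSoltes) (hle : H.edges.card ≤ 4)
    (he : e ∈ H.edges) (hf : f ∈ H.edges) (hef : e ≠ f) (hve : v ∈ e) (hvf : v ∈ f) :
    ∃ c d, c ≠ d ∧ (H.delete v).edges = {c, d} := by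
  have hsub : (H.delete v).edges ⊆ (H.edges.erase e).erase f := fun g hg => by
    obtain ⟨hg, hvg⟩ := Finset.mem_filter.mp hg
    simp only [Finset.mem_erase]
    exact ⟨fun h => hvg (h ▸ hvf), fun h => hvg (h ▸ hve), hg⟩
  have hcard := Finset.card_le_card hsub
  rw [Finset.card_erase_of_mem (Finset.mem_erase.mpr ⟨hef.symm, hf⟩),
    Finset.card_erase_of_mem he] at hcard
  exact Finset.card_eq_two.mp
    (le_antisymm (by omega) (hS.two_le_card_delete_edges (H.edge_sub e he hve)))

lemma IsSoltes.mem_or_mem_of_delete_edges_eq (hS : H.IsSoltes) (hv : v ∈ H.verts)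
    (hdel : (H.delete v).edges = {c, d}) (hu : u ∈ H.verts) (huv : u ≠ v) :
    u ∈ c ∨ u ∈ d := by
  obtain ⟨g, hg, hug⟩ := hS.exists_mem_delete_edges hv hu huv
  rw [hdel, Finset.mem_insert, Finset.mem_singleton] at hg
  rcases hg with rfl | rfl
  · exact Or.inl hug
  · exact Or.inr hug

lemma IsSoltes.dist_delete_le_two (hS : H.IsSoltes) (hv : v ∈ H.verts) (hcd : c ≠ d)
    (hdel : (H.delete v).edges = {c, d}) (hu : u ∈ H.verts.erase v) (hw : w ∈ H.verts.erase v) :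
    (H.delete v).dist u w ≤ 2 := by
  have hc : c ∈ (H.delete v).edges := by simp [hdel]
  have hd : d ∈ (H.delete v).edges := by simp [hdel]
  obtain ⟨g, hg, hgc, hnd⟩ := (hS.2.2 v hv).1.exists_not_disjoint hc hd hcd
  obtain ⟨z, hzc, hzg⟩ := Finset.not_disjoint_iff.mp hnd
  have hzd : z ∈ d := by
    rw [hdel, Finset.mem_insert, Finset.mem_singleton] at hg
    exact hg.resolve_left hgc ▸ hzg
  rcases hS.mem_or_mem_of_delete_edges_eq hv hdel (Finset.mem_of_mem_erase hu)
    (Finset.ne_of_mem_erase hu) with huc | hud <;>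
  rcases hS.mem_or_mem_of_delete_edges_eq hv hdel (Finset.mem_of_mem_erase hw)
    (Finset.ne_of_mem_erase hw) with hwc | hwd
  · exact dist_le_two_of_mem hc hc huc hzc hzc hwc
  · exact dist_le_two_of_mem hc hd huc hzc hzd hwd
  · exact dist_le_two_of_mem hd hc hud hzd hzc hwc
  · exact dist_le_two_of_mem hd hd hud hzd hzd hwd

lemma IsSoltes.card_le_three (hS : H.IsSoltes) (hle : H.edges.card ≤ 4) (hv : v ∈ H.verts)
    (hdel : (H.delete v).edges = {c, d}) (he : e ∈ H.edges) (hve : v ∈ e) : e.card ≤ 3 := by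
  have hc : c ∈ (H.delete v).edges := by simp [hdel]
  have hd : d ∈ (H.delete v).edges := by simp [hdel]
  obtain ⟨hc, hvc⟩ := Finset.mem_filter.mp hc
  obtain ⟨hd, hvd⟩ := Finset.mem_filter.mp hd
  have hsub : e.erase v ⊆ (e ∩ c) ∪ (e ∩ d) := fun u hu => by
    obtain ⟨huv, hue⟩ := Finset.mem_erase.mp hu
    rcases hS.mem_or_mem_of_delete_edges_eq hv hdel (H.edge_sub e he hue) huv with h | h <;>
      simp [hue, h]
  have hec : (e ∩ c).card ≤ 1 := hS.card_inter_le_one hle he hc fun h => hvc (h ▸ hve)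
  have hed : (e ∩ d).card ≤ 1 := hS.card_inter_le_one hle he hd fun h => hvd (h ▸ hve)
  have := (Finset.card_le_card hsub).trans (Finset.card_union_le _ _)
  have := Finset.card_erase_add_one hve
  omega

lemma IsSoltes.card_filter_le_dist (hS : H.IsSoltes) (hle : H.edges.card ≤ 4)
    (hv : v ∈ H.verts) (hdel : (H.delete v).edges = {c, d}) (hu : u ∈ H.verts.erase v) :
    {w ∈ H.verts.erase v | u ≠ w ∧ ∃ e ∈ H.edges, v ∈ e ∧ u ∈ e ∧ w ∈ e}.card
      ≤ H.dist u v := by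
  set A := {w ∈ H.verts.erase v | u ≠ w ∧ ∃ e ∈ H.edges, v ∈ e ∧ u ∈ e ∧ w ∈ e}
  rcases A.eq_empty_or_nonempty with hA | ⟨w₀, hw₀⟩
  · simp [hA]
  obtain ⟨-, -, e, he, hve, hue, -⟩ := Finset.mem_filter.mp hw₀
  have huv := Finset.ne_of_mem_erase hu
  have hsub : A ⊆ (e.erase v).erase u := fun w hw => by
    obtain ⟨hwv, huw, f, hf, hvf, huf, hwf⟩ := Finset.mem_filter.mp hw
    have hfe : f = e := by
      by_contra hfe
      exact huv (Finset.card_le_one.mp (hS.card_inter_le_one hle hf he hfe) u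
        (Finset.mem_inter.mpr ⟨huf, hue⟩) v (Finset.mem_inter.mpr ⟨hvf, hve⟩))
    subst hfe
    exact Finset.mem_erase.mpr
      ⟨Ne.symm huw, Finset.mem_erase.mpr ⟨Finset.ne_of_mem_erase hwv, hwf⟩⟩
  have hcard := Finset.card_le_card hsub
  rw [Finset.card_erase_of_mem (Finset.mem_erase.mpr ⟨huv, hue⟩), Finset.card_erase_of_mem hve]
    at hcard
  have := hS.card_le_three hle hv hdel he hve
  have := (reachable_of_mem he hue hve).pos_dist_of_ne huv
  unfold dist
  omega

lemma IsSoltes.sum_dist_delete_le (hS : H.IsSoltes) (hle : H.edges.card ≤ 4)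
    (hv : v ∈ H.verts) (hcd : c ≠ d) (hdel : (H.delete v).edges = {c, d})
    (hu : u ∈ H.verts.erase v) :
    ∑ w ∈ H.verts.erase v, (H.delete v).dist u w
      ≤ ∑ w ∈ H.verts.erase v, H.dist u w + H.dist u v :=
  calc ∑ w ∈ H.verts.erase v, (H.delete v).dist u w
      ≤ ∑ w ∈ H.verts.erase v, (H.dist u w
          + if u ≠ w ∧ ∃ e ∈ H.edges, v ∈ e ∧ u ∈ e ∧ w ∈ e then 1 else 0) :=
        Finset.sum_le_sum fun w hw => dist_delete_le_dist_add
          (hS.dist_delete_le_two hv hcd hdel hu hw)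
          (hS.2.1 u (Finset.mem_of_mem_erase hu) w (Finset.mem_of_mem_erase hw))
    _ = ∑ w ∈ H.verts.erase v, H.dist u w +
          {w ∈ H.verts.erase v |
            u ≠ w ∧ ∃ e ∈ H.edges, v ∈ e ∧ u ∈ e ∧ w ∈ e}.card := by
        rw [Finset.sum_add_distrib, Finset.sum_boole, Nat.cast_id]
    _ ≤ ∑ w ∈ H.verts.erase v, H.dist u w + H.dist u v :=
        Nat.add_le_add_left (hS.card_filter_le_dist hle hv hdel hu) _

end SHypergraph

theorem stmt16 {α : Type*} [DecidableEq α] (H : SHypergraph α) (h : H.IsSoltes) :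
    5 ≤ H.edges.card := by
  by_contra! hlt
  have hle : H.edges.card ≤ 4 := Nat.le_of_lt_succ hlt
  obtain ⟨v, a, b, ha, hb, hab, hva, hvb⟩ := h.exists_mem_mem
  have hv := H.edge_sub a ha hva
  obtain ⟨c, d, hcd, hdel⟩ := h.exists_delete_edges_eq_pair hle ha hb hab hva hvb
  exact (h.2.2 v hv).2.not_lt (SHypergraph.wiener_delete_lt h.2.1 hv h.1 fun u hu =>
    h.sum_dist_delete_le hle hv hcd hdel hu)
end
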